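/- arXiv:1903.05515 — 2 statements merged into one kernel-verified Lean document; each statement's English description precedes it below -/
import Mathlib

section
/- Let M be an infinite strongly minimal right R-module (equivalently, an infinite strongly minimal trivially valued R-module) and let I = {r ∈ R : M.r = 0}. Then either I = {0}, in which case M is divisible and ann_M(r) is finite for every nonzero r ∈ R; or I ≠ {0}, in which case I = rR for an irreducible polynomial r ∈ R and M is an (R/rR)-vector space. -/
open FirstOrder Language Set

universe u v w x y

/-! ## Skew polynomial rings `K[t;φ]` -/

/-- `(R, ι, t)` realizes the skew polynomial ring `K[t;φ]` : the commutation rule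
`a·t = t·a^φ` holds, and every element of `R` is uniquely a finite sum `∑ tⁱ·aᵢ`
with right-hand coefficients `aᵢ ∈ K`. -/
structure IsSkewPolyRing (K : Type u) [Field K] (φ : K →+* K) (R : Type v) [Ring R]
    (ι : K →+* R) (t : R) : Prop where
  commute_rule : ∀ a : K, ι a * t = t * ι (φ a)
  unique_rep : ∀ r : R, ∃! c : ℕ →₀ K, r = c.sum fun i a => t ^ i * ι a

/-- Right scalar multiplication of a right `R`-module (i.e. a module over `Rᵐᵒᵖ`). -/
abbrev rsmul {R : Type v} [Ring R] {M : Type w} [AddCommGroup M] [Module Rᵐᵒᵖ M]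
    (x : M) (r : R) : M :=
  MulOpposite.op r • x

/-- The set `M.r` is everything, i.e. `x ↦ x.r` is surjective, for every nonzero `r`:
`M` is a divisible right `R`-module. -/
def RDivisible (R : Type v) [Ring R] (M : Type w) [AddCommGroup M] [Module Rᵐᵒᵖ M] : Prop :=
  ∀ r : R, r ≠ 0 → ∀ y : M, ∃ x : M, rsmul x r = y

/-- A subset `N` of `M` is divisible: `N.r = N` for every nonzero `r ∈ R`. -/
def RDivisibleIn (R : Type v) [Ring R] {M : Type w} [AddCommGroup M] [Module Rᵐᵒᵖ M]
    (N : Set M) : Prop :=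
  ∀ r : R, r ≠ 0 → ∀ y ∈ N, ∃ x ∈ N, rsmul x r = y

/-- The torsion subset of a right `R`-module. -/
def torsionSet (R : Type v) [Ring R] (M : Type w) [AddCommGroup M] [Module Rᵐᵒᵖ M] :
    Set M :=
  {z : M | ∃ r : R, r ≠ 0 ∧ rsmul z r = 0}

/-- `s ∈ R` is separable if it is not divisible by `t`. -/
def SeparablePoly {R : Type v} [Ring R] (t s : R) : Prop :=
  ¬ ∃ q : R, s = t * q

/-- `M = A ⊕ B` as an internal direct sum of subsets. -/
def IsInternalDirectSum {M : Type w} [AddCommGroup M] (A B : Set M) : Prop :=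
  ∀ x : M, ∃! p : M × M, p.1 ∈ A ∧ p.2 ∈ B ∧ x = p.1 + p.2

/-- The quotient `R/rR` is a (skew) field: `rR` is a proper two-sided ideal and every
element not in `rR` is invertible modulo `rR`. -/
def QuotByIsDivisionRing (R : Type v) [Ring R] (r : R) : Prop :=
  (¬ ∃ s : R, 1 = r * s) ∧
  (∀ a s : R, ∃ s' : R, a * (r * s) = r * s') ∧
  (∀ q : R, (¬ ∃ s : R, q = r * s) →
    ∃ q' : R, (∃ s : R, q * q' - 1 = r * s) ∧ (∃ s : R, q' * q - 1 = r * s))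

/-! ## Languages -/

/-- The language of right `R`-modules: constant `0`, unary `-` and `·r` (`r ∈ R`),
binary `+`. -/
def modLang (R : Type v) : FirstOrder.Language.{v, 0} :=
  ⟨fun n => match n with
    | 0 => PUnit
    | 1 => Option R
    | 2 => PUnit
    | _ => PEmpty,
   fun _ => PEmpty⟩

/-- The language of right `R`-modules together with a ternary relation symbol `C`. -/
def cModLang (R : Type v) : FirstOrder.Language.{v, 0} :=
  ⟨(modLang R).Functions,
   fun n => match n with
    | 3 => PUnit
    | _ => PEmpty⟩

/-- The pure language of a `C`-relation: a single ternary relation symbol. -/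
def cLang : FirstOrder.Language.{0, 0} :=
  ⟨fun _ => PEmpty,
   fun n => match n with
    | 3 => PUnit
    | _ => PEmpty⟩

/-- The language `L_V = {<, ∞, (·r)_{r ∈ R}}` of `R`-chains. -/
def chainLang (R : Type v) : FirstOrder.Language.{v, 0} :=
  ⟨fun n => match n with
    | 0 => PUnit
    | 1 => R
    | _ => PEmpty,
   fun n => match n with
    | 2 => PUnit
    | _ => PEmpty⟩

/-- The language `L'_V = L_V ∪ {Rₙ : n ∈ ℕ}` with additional unary predicates `Rₙ`. -/
def chainLang' (R : Type v) : FirstOrder.Language.{v, 0} :=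
  ⟨(chainLang R).Functions,
   fun n => match n with
    | 1 => ℕ
    | 2 => PUnit
    | _ => PEmpty⟩

/-! ## Structures -/

/-- Any right `R`-module is a `modLang R`-structure. -/
instance modStructure (R : Type v) [Ring R] (M : Type w) [AddCommGroup M]
    [Module Rᵐᵒᵖ M] : (modLang R).Structure M where
  funMap {n} f x :=
    match n, f, x with
    | 0, _, _ => 0
    | 1, none, x => -x 0
    | 1, some r, x => rsmul (x 0) r
    | 2, _, x => x 0 + x 1
    | _ + 3, f, _ => PEmpty.elim f
  RelMap {_} r _ := PEmpty.elim r

/-- A subset of `M` closed under the module operations. -/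
structure SubmoduleSet (R : Type v) [Ring R] (M : Type w) [AddCommGroup M]
    [Module Rᵐᵒᵖ M] (N : Set M) : Prop where
  zero_mem : (0 : M) ∈ N
  add_mem : ∀ x y : M, x ∈ N → y ∈ N → x + y ∈ N
  neg_mem : ∀ x : M, x ∈ N → -x ∈ N
  smul_mem : ∀ (r : R) (x : M), x ∈ N → rsmul x r ∈ N

/-- The `modLang R`-structure on a subset closed under the module operations. -/
def setModStructure (R : Type v) [Ring R] (M : Type w) [AddCommGroup M] [Module Rᵐᵒᵖ M]
    (N : Set M) (h : SubmoduleSet R M N) : (modLang R).Structure N where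
  funMap {n} f x :=
    match n, f, x with
    | 0, _, _ => ⟨0, h.zero_mem⟩
    | 1, none, x => ⟨-(x 0 : M), h.neg_mem _ (x 0).2⟩
    | 1, some r, x => ⟨rsmul (x 0 : M) r, h.smul_mem r _ (x 0).2⟩
    | 2, _, x => ⟨(x 0 : M) + (x 1 : M), h.add_mem _ _ (x 0).2 (x 1).2⟩
    | _ + 3, f, _ => PEmpty.elim f
  RelMap {_} r _ := PEmpty.elim r

/-- The `cModLang R`-structure on a right `R`-module endowed with a ternary relation `C`. -/
def cModStructure (R : Type v) [Ring R] (M : Type w) [AddCommGroup M] [Module Rᵐᵒᵖ M]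
    (C : M → M → M → Prop) : (cModLang R).Structure M where
  funMap {n} f x :=
    match n, f, x with
    | 0, _, _ => 0
    | 1, none, x => -x 0
    | 1, some r, x => rsmul (x 0) r
    | 2, _, x => x 0 + x 1
    | _ + 3, f, _ => PEmpty.elim f
  RelMap {n} r x :=
    match n, r, x with
    | 3, _, x => C (x 0) (x 1) (x 2)
    | 0, r, _ => PEmpty.elim r
    | 1, r, _ => PEmpty.elim r
    | 2, r, _ => PEmpty.elim r
    | _ + 4, r, _ => PEmpty.elim r

/-- The `cModLang R`-structure on a subset closed under the module operations, with a
ternary relation `C` restricted from the ambient module. -/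
def cModStructureSet (R : Type v) [Ring R] (M : Type w) [AddCommGroup M] [Module Rᵐᵒᵖ M]
    (N : Set M) (h : SubmoduleSet R M N) (C : M → M → M → Prop) :
    (cModLang R).Structure N where
  funMap {n} f x :=
    match n, f, x with
    | 0, _, _ => ⟨0, h.zero_mem⟩
    | 1, none, x => ⟨-(x 0 : M), h.neg_mem _ (x 0).2⟩
    | 1, some r, x => ⟨rsmul (x 0 : M) r, h.smul_mem r _ (x 0).2⟩
    | 2, _, x => ⟨(x 0 : M) + (x 1 : M), h.add_mem _ _ (x 0).2 (x 1).2⟩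
    | _ + 3, f, _ => PEmpty.elim f
  RelMap {n} r x :=
    match n, r, x with
    | 3, _, x => C (x 0) (x 1) (x 2)
    | 0, r, _ => PEmpty.elim r
    | 1, r, _ => PEmpty.elim r
    | 2, r, _ => PEmpty.elim r
    | _ + 4, r, _ => PEmpty.elim r

/-- The `cLang`-structure determined by a ternary relation. -/
def cRelStructure (N : Type w) (C : N → N → N → Prop) : cLang.Structure N where
  funMap {_} f _ := PEmpty.elim f
  RelMap {n} r x :=
    match n, r, x with
    | 3, _, x => C (x 0) (x 1) (x 2)
    | 0, r, _ => PEmpty.elim r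
    | 1, r, _ => PEmpty.elim r
    | 2, r, _ => PEmpty.elim r
    | _ + 4, r, _ => PEmpty.elim r

/-- The `chainLang R`-structure (`L_V`-structure) on a chain `Δ` with maximum `infty`
and action `act` of `R`. -/
def chainStructure (R : Type v) [Ring R] (Δ : Type w) [LinearOrder Δ]
    (infty : Δ) (act : Δ → R → Δ) : (chainLang R).Structure Δ where
  funMap {n} f x :=
    match n, f, x with
    | 0, _, _ => infty
    | 1, r, x => act (x 0) r
    | _ + 2, f, _ => PEmpty.elim f
  RelMap {n} r x :=
    match n, r, x with
    | 2, _, x => x 0 < x 1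
    | 0, r, _ => PEmpty.elim r
    | 1, r, _ => PEmpty.elim r
    | _ + 3, r, _ => PEmpty.elim r

/-- The `chainLang' R`-structure (`L'_V`-structure) on the chain of a valued module:
the unary predicate `Rₙ` holds at `γ` iff `|M_{≥γ}/M_{>γ}| ≥ n`. -/
def chainStructure' (R : Type v) [Ring R] (M : Type w) [AddCommGroup M]
    (Δ : Type x) [LinearOrder Δ] (infty : Δ) (act : Δ → R → Δ) (v : M → Δ) :
    (chainLang' R).Structure Δ where
  funMap {n} f x :=
    match n, f, x with
    | 0, _, _ => infty
    | 1, r, x => act (x 0) r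
    | _ + 2, f, _ => PEmpty.elim f
  RelMap {n} r x :=
    match n, r, x with
    | 1, k, x =>
        ∃ f : Fin k → M, (∀ i, x 0 ≤ v (f i)) ∧ ∀ i j, i ≠ j → v (f i - f j) ≤ x 0
    | 2, _, x => x 0 < x 1
    | 0, r, _ => PEmpty.elim r
    | _ + 3, r, _ => PEmpty.elim r

/-- The `chainLang R`-structure on a subset of a chain closed under the action. -/
def chainStructureOn (R : Type v) [Ring R] (Δ : Type w) [LinearOrder Δ]
    (infty : Δ) (act : Δ → R → Δ) (S : Set Δ)
    (h0 : infty ∈ S) (hcl : ∀ δ ∈ S, ∀ r : R, act δ r ∈ S) :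
    (chainLang R).Structure S where
  funMap {n} f x :=
    match n, f, x with
    | 0, _, _ => ⟨infty, h0⟩
    | 1, r, x => ⟨act (x 0 : Δ) r, hcl _ (x 0).2 r⟩
    | _ + 2, f, _ => PEmpty.elim f
  RelMap {n} r x :=
    match n, r, x with
    | 2, _, x => (x 0 : Δ) < (x 1 : Δ)
    | 0, r, _ => PEmpty.elim r
    | 1, r, _ => PEmpty.elim r
    | _ + 3, r, _ => PEmpty.elim r

/-! ## Minimality notions -/

/-- A structure is strongly minimal if in every elementarily equivalent structure,
every subset definable with parameters is finite or cofinite. -/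
def StronglyMinimal (L : FirstOrder.Language.{u, v}) (M : Type w) [L.Structure M] : Prop :=
  ∀ (N : Type w) [L.Structure N],
    L.ElementarilyEquivalent M N →
      ∀ s : Set N, Set.Definable₁ (univ : Set N) L s → s.Finite ∨ sᶜ.Finite

/-- Strong minimality of a subset of a module, viewed as a right `R`-module in its own
right (for any witness that it is a submodule). -/
def StronglyMinimalSet (R : Type v) [Ring R] {M : Type w} [AddCommGroup M]
    [Module Rᵐᵒᵖ M] (N : Set M) : Prop :=
  ∀ h : SubmoduleSet R M N,
    letI := setModStructure R M N h
    StronglyMinimal (modLang R) N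

/-- A subset is quantifier-free definable, with parameters, using only the ternary
relation `C`. -/
def QFCDefinable {N : Type w} (C : N → N → N → Prop) (s : Set N) : Prop :=
  letI : cLang.Structure N := cRelStructure N C
  ∃ (k : ℕ) (φ : cLang.Formula (Fin k ⊕ Fin 1)) (c : Fin k → N),
    φ.IsQF ∧ s = {a : N | φ.Realize (Sum.elim c fun _ => a)}

/-- A structure in a language `L` with a distinguished ternary relation symbol `c` is
`C`-minimal if in every elementarily equivalent structure, every subset definable with
parameters is quantifier-free definable using only the relation `C`. -/
def CMinimal (L : FirstOrder.Language.{u, v}) (c : L.Relations 3) (M : Type w) [L.Structure M] :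
    Prop :=
  ∀ (N : Type w) [L.Structure N],
    L.ElementarilyEquivalent M N →
      ∀ s : Set N, Set.Definable₁ (univ : Set N) L s →
        QFCDefinable (fun a b d => Structure.RelMap c ![a, b, d]) s

/-- `C`-minimality of a subset of a module closed under the module operations,
with the `C`-relation restricted from the ambient module. -/
def CMinimalSet (R : Type v) [Ring R] (M : Type w) [AddCommGroup M] [Module Rᵐᵒᵖ M]
    (N : Set M) (C : M → M → M → Prop) : Prop :=
  ∀ h : SubmoduleSet R M N,
    letI := cModStructureSet R M N h C
    CMinimal (cModLang R) PUnit.unit N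

/-- A point or an interval in a linear order. -/
def IsIntervalOrPoint {Δ : Type w} [LinearOrder Δ] (s : Set Δ) : Prop :=
  (∃ a, s = {a}) ∨ (∃ a b, s = Ioo a b) ∨ (∃ a b, s = Ico a b) ∨ (∃ a b, s = Ioc a b) ∨
  (∃ a b, s = Icc a b) ∨ (∃ a, s = Ioi a) ∨ (∃ a, s = Ici a) ∨ (∃ a, s = Iio a) ∨
  (∃ a, s = Iic a) ∨ s = univ ∨ s = ∅

/-- A linearly ordered structure is o-minimal if every subset definable with parameters
is a finite union of points and intervals. -/
def OMinimal (L : FirstOrder.Language.{u, v}) (Δ : Type w) [LinearOrder Δ] [L.Structure Δ] : Prop :=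
  ∀ s : Set Δ, Set.Definable₁ (univ : Set Δ) L s →
    ∃ (n : ℕ) (f : Fin n → Set Δ), (∀ i, IsIntervalOrPoint (f i)) ∧ s = ⋃ i, f i

/-- o-minimality of a subset of a chain (closed under the action and containing `∞`),
as an `L_V`-structure. -/
def OMinimalChainOn (R : Type v) [Ring R] (Δ : Type w) [LinearOrder Δ]
    (infty : Δ) (act : Δ → R → Δ) (S : Set Δ) : Prop :=
  ∀ (h0 : infty ∈ S) (hcl : ∀ δ ∈ S, ∀ r : R, act δ r ∈ S),
    letI := chainStructureOn R Δ infty act S h0 hcl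
    OMinimal (chainLang R) S

/-! ## Valued `R`-modules -/

/-- `(M, Δ, infty, act, v)` is a valued right `R`-module over the skew polynomial ring
`R = K[t;φ]` (with `K` acting through `ι`): `Δ` is an `R`-chain with maximum `infty`
and `v` is a surjective valuation compatible with the action. -/
structure IsValuedRMod (K : Type u) [Field K] (φ : K →+* K) (R : Type v) [Ring R]
    (ι : K →+* R) (t : R) (M : Type w) [AddCommGroup M] [Module Rᵐᵒᵖ M]
    (Δ : Type x) [LinearOrder Δ] (infty : Δ) (act : Δ → R → Δ) (v : M → Δ) : Prop where
  le_infty : ∀ γ : Δ, γ ≤ infty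
  actK_strictMono : ∀ a : K, a ≠ 0 → ∀ γ δ : Δ, γ ≠ infty → δ ≠ infty → δ < γ →
    act δ (ι a) < act γ (ι a)
  actK_mul : ∀ a b : K, a ≠ 0 → b ≠ 0 → ∀ γ : Δ, γ ≠ infty →
    act γ (ι (a * b)) = act (act γ (ι a)) (ι b)
  actK_expansive : ∀ a : K, a ≠ 0 → ∀ γ δ : Δ, γ ≠ infty → δ ≠ infty →
    γ < act γ (ι a) → δ < act δ (ι a)
  actK_add : ∀ a b : K, ∀ γ : Δ, γ ≠ infty →
    min (act γ (ι a)) (act γ (ι b)) ≤ act γ (ι (a + b))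
  actK_sub : ∀ a b : K, ∀ γ : Δ, γ ≠ infty →
    min (act γ (ι a)) (act γ (ι b)) ≤ act γ (ι (a - b))
  act_zero : ∀ γ : Δ, act γ 0 = infty
  act_one : ∀ γ : Δ, act γ 1 = γ
  actK_infty : ∀ b : K, b ≠ 0 → act infty (ι b) = infty
  act_t_strictMono : ∀ γ δ : Δ, γ ≠ infty → δ ≠ infty → δ < γ → act δ t < act γ t
  act_t_infty : act infty t = infty
  act_t_ne_infty : ∀ γ : Δ, γ ≠ infty → act γ t ≠ infty
  act_ta : ∀ (a : K) (γ : Δ), act γ (t * ι a) = act (act γ t) (ι a)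
  act_tpow : ∀ (n : ℕ) (a : K) (γ : Δ),
    act γ (t ^ (n + 1) * ι a) = act (act γ (t ^ n)) (t * ι a)
  act_min : ∀ (c : ℕ →₀ K) (hc : c.support.Nonempty), ∀ γ : Δ, γ ≠ infty →
    act γ (c.sum fun i a => t ^ i * ι a) = c.support.inf' hc fun i => act γ (t ^ i * ι (c i))
  act_monomial_lt : ∀ (m n : ℕ) (a b : K), a ≠ 0 → b ≠ 0 → n < m → ∀ γ : Δ, γ ≠ infty →
    act γ (t ^ m * ι a) ≤ act γ (t ^ n * ι b) →
    ∀ δ : Δ, δ < γ → act δ (t ^ m * ι a) < act δ (t ^ n * ι b)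
  v_surjective : Function.Surjective v
  v_eq_infty_iff : ∀ z : M, v z = infty ↔ z = 0
  v_sub : ∀ z y : M, min (v z) (v y) ≤ v (z - y)
  v_smulK : ∀ (z : M) (a : K), v (rsmul z (ι a)) = act (v z) (ι a)
  v_smul_t : ∀ z : M, v (rsmul z t) = act (v z) t

/-- The canonical `C`-relation of a valued module (additive convention):
`C(x,y,z) ⟺ v(x−y) = v(x−z) < v(y−z)`. -/
def Crel {M : Type w} [AddCommGroup M] {Δ : Type x} [LinearOrder Δ] (v : M → Δ)
    (a b c : M) : Prop :=
  v (a - b) = v (a - c) ∧ v (a - c) < v (b - c)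

/-- `(M,v)` is trivially valued: `v` takes at most two values. -/
def TriviallyValued {M : Type w} [AddCommGroup M] {Δ : Type x} (v : M → Δ) : Prop :=
  ∀ a b : M, a ≠ 0 → b ≠ 0 → v a = v b

/-- `(M,v)` is `K`-trivially valued: `v(x.a) = v(x)` for every `a ∈ K^×`. -/
def KTriviallyValued {K : Type u} [Field K] {R : Type v} [Ring R] (ι : K →+* R)
    {M : Type w} [AddCommGroup M] [Module Rᵐᵒᵖ M] {Δ : Type x} (v : M → Δ) : Prop :=
  ∀ (z : M) (a : K), a ≠ 0 → v (rsmul z (ι a)) = v z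

/-- `M_{>θ} = {x | v(x.t) > v(x)}`. -/
def gtTheta {R : Type v} [Ring R] (t : R) {M : Type w} [AddCommGroup M] [Module Rᵐᵒᵖ M]
    {Δ : Type x} [LinearOrder Δ] (v : M → Δ) : Set M :=
  {z : M | v z < v (rsmul z t)}

/-- `M_{≥θ} = {x | v(x.t) ≥ v(x)}`. -/
def geTheta {R : Type v} [Ring R] (t : R) {M : Type w} [AddCommGroup M] [Module Rᵐᵒᵖ M]
    {Δ : Type x} [LinearOrder Δ] (v : M → Δ) : Set M :=
  {z : M | v z ≤ v (rsmul z t)}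

/-- `(M,v)` is henselian: for every separable `s`, `x ↦ x.s` is a bijection of `M_{>θ}`. -/
def HenselianVM {R : Type v} [Ring R] (t : R) {M : Type w} [AddCommGroup M]
    [Module Rᵐᵒᵖ M] {Δ : Type x} [LinearOrder Δ] (v : M → Δ) : Prop :=
  ∀ s : R, SeparablePoly t s →
    Set.BijOn (fun z : M => rsmul z s) (gtTheta t v) (gtTheta t v)

/-- `B` is a subset of `S` of finite index (finitely many additive translates of `B`
cover `S`). -/
def HasFiniteIndexIn {M : Type w} [AddCommGroup M] (B S : Set M) : Prop :=
  B ⊆ S ∧ ∃ (n : ℕ) (a : Fin n → M), S ⊆ ⋃ i, (fun b => b + a i) '' B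

/-- `S` contains a ball (centered at `0`, of radius `≠ ∞`) of finite index in `S`. -/
def ContainsBallFiniteIndex {M : Type w} [AddCommGroup M] {Δ : Type x} [LinearOrder Δ]
    (v : M → Δ) (infty : Δ) (S : Set M) : Prop :=
  ∃ γ : Δ, γ ≠ infty ∧
    (HasFiniteIndexIn {z : M | γ ≤ v z} S ∨ HasFiniteIndexIn {z : M | γ < v z} S)

/-- `(M,v)` is residually divisible and affinely maximal: for every nonzero `r ∈ R` and
`z ∈ M` there is `y` with `y.r = z` and `v(y.r) = v(y)·r`. -/
def ResDivAffMax {R : Type v} [Ring R] {M : Type w} [AddCommGroup M] [Module Rᵐᵒᵖ M]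
    {Δ : Type x} (act : Δ → R → Δ) (v : M → Δ) : Prop :=
  ∀ r : R, r ≠ 0 → ∀ z : M, ∃ y : M, rsmul y r = z ∧ v (rsmul y r) = act (v y) r

/-! ## Valued fields as valued modules -/

/-- The valuation ring of a (multiplicative Krull) valuation. -/
def ValRing {F : Type u} {Γ₀ : Type v} [Field F] [LinearOrderedCommGroupWithZero Γ₀]
    (v : Valuation F Γ₀) : Set F :=
  {z : F | v z ≤ 1}

/-- The canonical `C`-relation of a (multiplicatively written) valued field:
in additive notation, `C(x,y,z) ⟺ v(x−y) = v(x−z) < v(y−z)`. -/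
def valC {F : Type u} {Γ₀ : Type v} [Field F] [LinearOrderedCommGroupWithZero Γ₀]
    (v : Valuation F Γ₀) (a b c : F) : Prop :=
  v (a - b) = v (a - c) ∧ v (b - c) < v (a - c)

/-- A valuation is henselian (Newton–Hensel approximation property on the valuation
ring). -/
def HenselianValuation {F : Type u} {Γ₀ : Type v} [Field F]
    [LinearOrderedCommGroupWithZero Γ₀] (v : Valuation F Γ₀) : Prop :=
  ∀ P : Polynomial F, (∀ i, v (P.coeff i) ≤ 1) → ∀ a : F, v a ≤ 1 →
    v (P.eval a) < v (P.derivative.eval a) ^ 2 →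
    ∃ b : F, v b ≤ 1 ∧ P.eval b = 0 ∧ v (b - a) < v (P.derivative.eval a)

/-- The residue field of `v` is finite. -/
def FiniteResidueField {F : Type u} {Γ₀ : Type v} [Field F]
    [LinearOrderedCommGroupWithZero Γ₀] (v : Valuation F Γ₀) : Prop :=
  ∃ n : ℕ, ∀ z : Fin (n + 1) → F, (∀ i, v (z i) ≤ 1) →
    ∃ i j, i ≠ j ∧ v (z i - z j) < 1

/-- The residue field of `v` is `p`-closed: every nonzero additive polynomial
`∑ aᵢ X^{pⁱ}` over the residue field is surjective. -/
def PClosedResidue (p : ℕ) {F : Type u} {Γ₀ : Type v} [Field F]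
    [LinearOrderedCommGroupWithZero Γ₀] (v : Valuation F Γ₀) : Prop :=
  ∀ (d : ℕ) (a : Fin (d + 1) → F), (∀ i, v (a i) ≤ 1) → (∃ i, v (a i) = 1) →
    ∀ z : F, v z ≤ 1 → ∃ y : F, v y ≤ 1 ∧ v ((∑ i, a i * y ^ p ^ (i : ℕ)) - z) < 1

/-- A field `k` of characteristic `p` is `p`-closed: every nonzero additive polynomial
with coefficients in `k` is surjective on `k`. -/
def PClosedField (p : ℕ) (k : Type u) [Field k] : Prop :=
  ∀ (d : ℕ) (a : Fin (d + 1) → k), (∃ i, a i ≠ 0) →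
    Function.Surjective fun z : k => ∑ i, a i * z ^ p ^ (i : ℕ)

/-- The value group of `v` is divisible. -/
def DivisibleValueGroup {F : Type u} {Γ₀ : Type v} [Field F]
    [LinearOrderedCommGroupWithZero Γ₀] (v : Valuation F Γ₀) : Prop :=
  ∀ z : F, z ≠ 0 → ∀ n : ℕ, 0 < n → ∃ y : F, y ≠ 0 ∧ v y ^ n = v z

/-- `(F,v)` is algebraically maximal: it has no proper immediate algebraic extension. -/
def AlgebraicallyMaximal {F : Type u} {Γ₀ : Type v} [Field F]
    [LinearOrderedCommGroupWithZero Γ₀] (v : Valuation F Γ₀) : Prop :=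
  ∀ (L : Type u) [Field L] [Algebra F L], Algebra.IsAlgebraic F L →
    ∀ w : Valuation L Γ₀,
      (∀ z : F, w (algebraMap F L z) = v z) →
      (∀ z : L, ∃ y : F, w z = v y) →
      (∀ z : L, w z ≤ 1 → ∃ y : F, w (z - algebraMap F L y) < 1) →
      Function.Surjective (algebraMap F L)

/-! ## Puiseux series -/

/-- The set of Puiseux series over `k`, inside the Hahn series field `k((ℚ))`:
series whose support is contained in `(1/n)ℤ` for some `n ≥ 1`. -/
def PuiseuxSet (k : Type u) [Field k] : Set (HahnSeries ℚ k) :=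
  {f | ∃ n : ℕ, 0 < n ∧ ∀ q ∈ f.support, ∃ m : ℤ, q = (m : ℚ) / (n : ℚ)}

/-- The ring of Puiseux series over `k`: the valuation ring of the field of Puiseux
series. -/
def PuiseuxValRing (k : Type u) [Field k] : Set (HahnSeries ℚ k) :=
  {f | f ∈ PuiseuxSet k ∧ ∀ q ∈ f.support, 0 ≤ q}

/-- The canonical `C`-relation on Hahn series over `ℚ`, induced by the order valuation
(additive convention). -/
def hahnC {k : Type u} [Field k] (a b c : HahnSeries ℚ k) : Prop :=
  (a - b).orderTop = (a - c).orderTop ∧ (a - c).orderTop < (b - c).orderTop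

/-!
Strong minimality makes every definable subgroup of the infinite module `M` finite or all of `M`.
The kernel and the image of `x ↦ x.r` are definable subgroups which cannot both be finite, so for
each `r` either `M.r = 0`, or `ann_M(r)` is finite and `M.r = M`. If the annihilator `I` is zero
this is the first alternative. Otherwise `I` is a two-sided ideal, and since the degree makes
`K[t;φ]` right Euclidean, `I = rR` for an `r ∈ I` of minimal degree. The dichotomy makes `I`
completely prime (if `ab ∈ I` and `a ∉ I`, then `M.b = M.a.b = 0`), which by additivity of the
degree makes `r` irreducible. Finally `R/rR` is a division ring: for `q ∉ rR` the principal right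
ideal `qR + rR` strictly contains `rR`, hence is `R`, so `q` is right invertible modulo `rR`.
-/

open Polynomial

section SkewMul

variable {K : Type u} [Field K] (φ : K →+* K)

/-- The coefficients of `(∑ tⁱ·pᵢ) * (∑ tᵏ·qₖ) = ∑ tⁱ⁺ᵏ·φᵏ(pᵢ)·qₖ` in `K[t;φ]`. -/
noncomputable def skewMul (p q : K[X]) : K[X] :=
  q.sum fun k b => p.map (φ ^ k) * monomial k b

lemma natDegree_skewMul_le (p q : K[X]) :
    (skewMul φ p q).natDegree ≤ p.natDegree + q.natDegree := by
  refine natDegree_sum_le_of_forall_le _ _ fun k hk => ?_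
  calc (p.map (φ ^ k) * monomial k (q.coeff k)).natDegree
      ≤ (p.map (φ ^ k)).natDegree + (monomial k (q.coeff k)).natDegree := natDegree_mul_le
    _ ≤ p.natDegree + k := add_le_add natDegree_map_le (natDegree_monomial_le _)
    _ ≤ p.natDegree + q.natDegree := by
      have := le_natDegree_of_mem_supp k hk
      omega

lemma coeff_skewMul_natDegree_add (p q : K[X]) :
    (skewMul φ p q).coeff (p.natDegree + q.natDegree) =
      (φ ^ q.natDegree) p.leadingCoeff * q.leadingCoeff := by
  rw [skewMul, Polynomial.sum, finsetSum_coeff, Finset.sum_eq_single q.natDegree]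
  · rw [coeff_mul_monomial, coeff_map, leadingCoeff, leadingCoeff]
  · intro k hk hkm
    have hk' : k < q.natDegree := lt_of_le_of_ne (le_natDegree_of_mem_supp k hk) hkm
    rw [show p.natDegree + q.natDegree = p.natDegree + q.natDegree - k + k by omega,
      coeff_mul_monomial, coeff_map, coeff_eq_zero_of_natDegree_lt (by omega), map_zero,
      zero_mul]
  · intro hq
    rw [notMem_support_iff.mp hq, monomial_zero_right, mul_zero, coeff_zero]

variable {φ} {p q : K[X]}

lemma coeff_skewMul_natDegree_add_ne_zero (hp : p ≠ 0) (hq : q ≠ 0) :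
    (skewMul φ p q).coeff (p.natDegree + q.natDegree) ≠ 0 := by
  rw [coeff_skewMul_natDegree_add]
  exact mul_ne_zero ((_root_.map_ne_zero _).mpr (leadingCoeff_ne_zero.mpr hp))
    (leadingCoeff_ne_zero.mpr hq)

lemma natDegree_skewMul (hp : p ≠ 0) (hq : q ≠ 0) :
    (skewMul φ p q).natDegree = p.natDegree + q.natDegree :=
  natDegree_eq_of_le_of_coeff_ne_zero (natDegree_skewMul_le φ p q)
    (coeff_skewMul_natDegree_add_ne_zero hp hq)

lemma leadingCoeff_skewMul (hp : p ≠ 0) (hq : q ≠ 0) :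
    (skewMul φ p q).leadingCoeff = (φ ^ q.natDegree) p.leadingCoeff * q.leadingCoeff := by
  rw [leadingCoeff, natDegree_skewMul hp hq, coeff_skewMul_natDegree_add]

variable (p q) in
lemma degree_skewMul : (skewMul φ p q).degree = p.degree + q.degree := by
  rcases eq_or_ne p 0 with rfl | hp
  · simp [skewMul, Polynomial.sum]
  rcases eq_or_ne q 0 with rfl | hq
  · simp [skewMul]
  have hne : skewMul φ p q ≠ 0 := fun h0 =>
    coeff_skewMul_natDegree_add_ne_zero hp hq (by rw [h0, coeff_zero])
  rw [degree_eq_natDegree hp, degree_eq_natDegree hq, degree_eq_natDegree hne,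
    natDegree_skewMul hp hq]
  rfl

end SkewMul

section SkewEval

variable {K : Type u} [Field K] {R : Type v} [Ring R] (ι : K →+* R) (t : R)

noncomputable def skewEval : K[X] →+ R where
  toFun p := p.sum fun i a => t ^ i * ι a
  map_zero' := sum_zero_index _
  map_add' p q := sum_add_index p q _ (fun i => by simp) (fun i a b => by simp [mul_add])

lemma skewEval_monomial (i : ℕ) (a : K) : skewEval ι t (monomial i a) = t ^ i * ι a :=
  sum_monomial_index (n := i) a (fun i a => t ^ i * ι a) (by simp)

end SkewEval

lemma WithBot.eq_zero_of_add_le_self {m n : WithBot ℕ} (hm : 0 ≤ m) (hn : 0 ≤ n)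
    (h : m + n ≤ m) : n = 0 := by
  lift m to ℕ using ne_bot_of_le_ne_bot WithBot.zero_ne_bot hm
  lift n to ℕ using ne_bot_of_le_ne_bot WithBot.zero_ne_bot hn
  exact WithBot.coe_eq_zero.mpr (by norm_cast at h; omega)

namespace IsSkewPolyRing

variable {K : Type u} [Field K] {φ : K →+* K} {R : Type v} [Ring R] {ι : K →+* R} {t : R}
  (hR : IsSkewPolyRing K φ R ι t)
include hR

lemma mul_t_pow (a : K) (k : ℕ) : ι a * t ^ k = t ^ k * ι ((φ ^ k) a) := by
  induction k with
  | zero => simp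
  | succ k ih =>
    rw [pow_succ, ← mul_assoc, ih, mul_assoc, hR.commute_rule, ← mul_assoc, ← pow_succ,
      pow_succ' φ]
    rfl

lemma bijective_skewEval : Function.Bijective (skewEval ι t) := by
  refine ⟨fun p q hpq => ?_, fun r => ?_⟩
  · obtain ⟨c, -, hc⟩ := hR.unique_rep (skewEval ι t p)
    rw [← toFinsupp_inj, ← AddMonoidAlgebra.coeff_injective.eq_iff, hc p.toFinsupp.coeff rfl,
      hc q.toFinsupp.coeff hpq]
  · obtain ⟨c, hc, -⟩ := hR.unique_rep r
    exact ⟨⟨AddMonoidAlgebra.ofCoeff c⟩, hc.symm⟩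

noncomputable def skewEquiv : K[X] ≃+ R :=
  AddEquiv.ofBijective (skewEval ι t) hR.bijective_skewEval

noncomputable def degree (r : R) : WithBot ℕ := (hR.skewEquiv.symm r).degree

lemma degree_skewEval (p : K[X]) : hR.degree (skewEval ι t p) = p.degree :=
  congrArg Polynomial.degree (hR.skewEquiv.symm_apply_apply p)

lemma skewEval_mul_monomial (p : K[X]) (k : ℕ) (b : K) :
    skewEval ι t p * (t ^ k * ι b) = skewEval ι t (p.map (φ ^ k) * monomial k b) := by
  induction p using Polynomial.induction_on' with
  | add p q hp hq => rw [map_add, add_mul, hp, hq, Polynomial.map_add, add_mul, map_add]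
  | monomial i a =>
    rw [skewEval_monomial, Polynomial.map_monomial, monomial_mul_monomial, skewEval_monomial,
      mul_assoc, ← mul_assoc (ι a), hR.mul_t_pow, pow_add, map_mul]
    noncomm_ring

lemma skewEval_mul (p q : K[X]) :
    skewEval ι t p * skewEval ι t q = skewEval ι t (skewMul φ p q) := by
  simp only [skewMul, Polynomial.sum, map_sum, ← hR.skewEval_mul_monomial]
  rw [← Finset.mul_sum]
  rfl

lemma degree_mul (f g : R) : hR.degree (f * g) = hR.degree f + hR.degree g := by
  obtain ⟨p, rfl⟩ := hR.bijective_skewEval.2 f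
  obtain ⟨q, rfl⟩ := hR.bijective_skewEval.2 g
  exact (congrArg hR.degree (hR.skewEval_mul p q)).trans <|
    (hR.degree_skewEval _).trans <| (degree_skewMul p q).trans <|
      congrArg₂ (· + ·) (hR.degree_skewEval p).symm (hR.degree_skewEval q).symm

lemma zero_le_degree_iff {f : R} : 0 ≤ hR.degree f ↔ f ≠ 0 := by
  obtain ⟨p, rfl⟩ := hR.bijective_skewEval.2 f
  rw [hR.degree_skewEval, Polynomial.zero_le_degree_iff, Ne, Ne,
    map_eq_zero_iff _ hR.bijective_skewEval.injective]

lemma degree_one : hR.degree 1 = 0 := by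
  have : skewEval ι t (C 1) = 1 := by
    rw [← monomial_zero_left, skewEval_monomial, pow_zero, one_mul, map_one]
  rw [← this, hR.degree_skewEval, degree_C one_ne_zero]

lemma isUnit_of_degree_eq_zero {f : R} (h : hR.degree f = 0) : IsUnit f := by
  obtain ⟨p, rfl⟩ := hR.bijective_skewEval.2 f
  rw [hR.degree_skewEval] at h
  have ha : p.coeff 0 ≠ 0 := fun h0 => by
    rw [eq_C_of_degree_eq_zero h, h0, C_0, degree_zero] at h
    exact WithBot.bot_ne_zero h
  rw [eq_C_of_degree_eq_zero h, ← monomial_zero_left, skewEval_monomial, pow_zero, one_mul]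
  exact (isUnit_iff_ne_zero.mpr ha).map ι

lemma isUnit_right_of_degree_mul_le {a b : R} (hab : a * b ≠ 0)
    (h : hR.degree (a * b) ≤ hR.degree a) : IsUnit b := by
  rw [hR.degree_mul] at h
  exact hR.isUnit_of_degree_eq_zero <| WithBot.eq_zero_of_add_le_self
    (hR.zero_le_degree_iff.mpr (left_ne_zero_of_mul hab))
    (hR.zero_le_degree_iff.mpr (right_ne_zero_of_mul hab)) h

lemma isUnit_left_of_degree_mul_le {a b : R} (hab : a * b ≠ 0)
    (h : hR.degree (a * b) ≤ hR.degree b) : IsUnit a := by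
  rw [hR.degree_mul, add_comm] at h
  exact hR.isUnit_of_degree_eq_zero <| WithBot.eq_zero_of_add_le_self
    (hR.zero_le_degree_iff.mpr (right_ne_zero_of_mul hab))
    (hR.zero_le_degree_iff.mpr (left_ne_zero_of_mul hab)) h

lemma exists_degree_sub_mul_lt {f g : R} (hf : f ≠ 0) (hg : g ≠ 0)
    (h : hR.degree g ≤ hR.degree f) : ∃ q, hR.degree (f - g * q) < hR.degree f := by
  obtain ⟨p, rfl⟩ := hR.bijective_skewEval.2 f
  obtain ⟨d, rfl⟩ := hR.bijective_skewEval.2 g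
  have hp : p ≠ 0 := by rintro rfl; exact hf (map_zero _)
  have hd : d ≠ 0 := by rintro rfl; exact hg (map_zero _)
  rw [hR.degree_skewEval, hR.degree_skewEval, degree_eq_natDegree hp,
    degree_eq_natDegree hd, Nat.cast_le] at h
  set k := p.natDegree - d.natDegree
  set b := ((φ ^ k) d.leadingCoeff)⁻¹ * p.leadingCoeff
  have hb : b ≠ 0 := mul_ne_zero (inv_ne_zero ((_root_.map_ne_zero _).mpr
    (leadingCoeff_ne_zero.mpr hd))) (leadingCoeff_ne_zero.mpr hp)
  have hm : monomial k b ≠ 0 := by rwa [Ne, monomial_eq_zero_iff]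
  refine ⟨skewEval ι t (monomial k b), ?_⟩
  rw [hR.skewEval_mul, ← map_sub, hR.degree_skewEval, hR.degree_skewEval]
  refine degree_sub_lt_left ?_ hp ?_
  · rw [degree_skewMul, degree_monomial _ hb, degree_eq_natDegree hp, degree_eq_natDegree hd]
    norm_cast
    omega
  · rw [leadingCoeff_skewMul hd hm, natDegree_monomial_eq k hb, leadingCoeff_monomial,
      mul_inv_cancel_left₀ ((_root_.map_ne_zero _).mpr (leadingCoeff_ne_zero.mpr hd))]

lemma nontrivial : Nontrivial R := by
  refine ⟨0, 1, fun h => ?_⟩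
  have := hR.degree_one
  rw [← h, ← map_zero (skewEval ι t), hR.degree_skewEval, degree_zero] at this
  exact WithBot.bot_ne_zero this

lemma degree_le_degree_mul {r s : R} (h : r * s ≠ 0) : hR.degree r ≤ hR.degree (r * s) := by
  rw [hR.degree_mul]
  exact le_add_of_nonneg_right (hR.zero_le_degree_iff.mpr (right_ne_zero_of_mul h))

lemma dvd_of_mem_of_degree_le (I : AddSubgroup R) (hI : ∀ x ∈ I, ∀ s, x * s ∈ I) {r : R}
    (hr : r ∈ I) (hr0 : r ≠ 0) (hmin : ∀ x ∈ I, x ≠ 0 → hR.degree r ≤ hR.degree x) :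
    ∀ x ∈ I, r ∣ x := by
  intro x hx
  induction hd : hR.degree x using WellFoundedLT.induction generalizing x with
  | ind d ih =>
    rcases eq_or_ne x 0 with rfl | hx0
    · exact dvd_zero r
    obtain ⟨q, hq⟩ := hR.exists_degree_sub_mul_lt hx0 hr0 (hmin x hx hx0)
    obtain ⟨s, hs⟩ := ih _ (hd ▸ hq) (x - r * q) (I.sub_mem hx (hI r hr q)) rfl
    exact ⟨q + s, by rw [mul_add, ← hs, add_sub_cancel]⟩

lemma exists_forall_dvd (I : AddSubgroup R) (hI : ∀ x ∈ I, ∀ s, x * s ∈ I) :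
    ∃ r ∈ I, ∀ x ∈ I, r ∣ x := by
  by_cases hzero : ∃ x, x ∈ I ∧ x ≠ 0
  · obtain ⟨r, ⟨hr, hr0⟩, hmin⟩ := exists_minimalFor_of_wellFoundedLT _ hR.degree hzero
    exact ⟨r, hr, hR.dvd_of_mem_of_degree_le I hI hr hr0
      fun x hx hx0 => (le_total _ _).elim (hmin ⟨hx, hx0⟩) id⟩
  · refine ⟨0, I.zero_mem, fun x hx => ?_⟩
    obtain rfl : x = 0 := of_not_not fun hx0 => hzero ⟨x, hx, hx0⟩
    exact dvd_refl 0

lemma irreducible_of_dvd_mul {r : R} (hr0 : r ≠ 0) (hunit : ¬IsUnit r)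
    (hprime : ∀ a b, r ∣ a * b → r ∣ a ∨ r ∣ b) : Irreducible r := by
  refine ⟨hunit, fun a b hab => ?_⟩
  have hab0 : a * b ≠ 0 := hab ▸ hr0
  rcases hprime a b (hab ▸ dvd_refl r) with ⟨s, rfl⟩ | ⟨s, rfl⟩
  · exact Or.inr <| hR.isUnit_right_of_degree_mul_le hab0
      (hab ▸ hR.degree_le_degree_mul (left_ne_zero_of_mul hab0))
  · exact Or.inl <| hR.isUnit_left_of_degree_mul_le hab0
      (hab ▸ hR.degree_le_degree_mul (right_ne_zero_of_mul hab0))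

lemma exists_dvd_mul_sub_one {r q : R} (hr : Irreducible r) (hq : ¬r ∣ q) :
    ∃ q', r ∣ q * q' - 1 := by
  let J := (AddMonoidHom.mulLeft q).range ⊔ (AddMonoidHom.mulLeft r).range
  have hJ : ∀ x ∈ J, ∀ s, x * s ∈ J := by
    intro x hx s
    obtain ⟨_, ⟨u, rfl⟩, _, ⟨w, rfl⟩, rfl⟩ := AddSubgroup.mem_sup.mp hx
    exact AddSubgroup.mem_sup.mpr ⟨_, ⟨u * s, rfl⟩, _, ⟨w * s, rfl⟩,
      by simp only [AddMonoidHom.coe_mulLeft, add_mul, mul_assoc]⟩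
  obtain ⟨d, hdJ, hd⟩ := hR.exists_forall_dvd J hJ
  obtain ⟨e, he⟩ := hd r (AddSubgroup.mem_sup_right ⟨1, mul_one r⟩)
  rcases hr.isUnit_or_isUnit he with ⟨v, rfl⟩ | he_unit
  · obtain ⟨_, ⟨u, rfl⟩, _, ⟨w, rfl⟩, huw⟩ :=
      AddSubgroup.mem_sup.mp (hJ _ hdJ ↑v⁻¹)
    refine ⟨u, -w, ?_⟩
    simp only [AddMonoidHom.coe_mulLeft, Units.mul_inv] at huw
    rw [← huw, mul_neg]
    abel
  · exact absurd ((he_unit.dvd_mul_right.mp (he ▸ dvd_refl r)).trans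
      (hd q (AddSubgroup.mem_sup_left ⟨1, mul_one q⟩))) hq

lemma quotByIsDivisionRing {r : R} (hr : Irreducible r)
    (hideal : ∀ a x, r ∣ x → r ∣ a * x) : QuotByIsDivisionRing R r := by
  have := hR.nontrivial
  have hone : ¬r ∣ 1 := fun ⟨s, hs⟩ => hr.not_isUnit <|
    hR.isUnit_left_of_degree_mul_le (hs ▸ one_ne_zero) <| by
      rw [← hs, hR.degree_one]
      exact hR.zero_le_degree_iff.mpr (right_ne_zero_of_mul_eq_one hs.symm)
  refine ⟨hone, fun a s => hideal a _ (dvd_mul_right r s), fun q hq => ?_⟩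
  obtain ⟨q', hqq'⟩ := hR.exists_dvd_mul_sub_one hr hq
  have hq' : ¬r ∣ q' := fun h => hone <| by
    simpa using dvd_sub (hideal q q' h) hqq'
  obtain ⟨q'', hq'q''⟩ := hR.exists_dvd_mul_sub_one hr hq'
  -- `q ≡ q''` modulo `rR`, so the right inverse `q'` of `q` is also a left inverse
  have hqq'' : r ∣ q - q'' := by
    have : q - q'' = (q * q' - 1) * q'' - q * (q' * q'' - 1) := by noncomm_ring
    rw [this]
    exact dvd_sub (hqq'.mul_right q'') (hideal q _ hq'q'')
  refine ⟨q', hqq', ?_⟩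
  have : q' * q - 1 = q' * (q - q'') + (q' * q'' - 1) := by noncomm_ring
  rw [this]
  exact dvd_add (hideal q' _ hqq'') hq'q''

end IsSkewPolyRing

section StronglyMinimal

variable {R : Type v} [Ring R] {M : Type w} [AddCommGroup M] [Module Rᵐᵒᵖ M]

lemma AddSubgroup.eq_top_of_compl_finite {G : Type*} [AddGroup G] [Infinite G]
    (H : AddSubgroup G) (h : (H : Set G)ᶜ.Finite) : H = ⊤ := by
  by_contra hH
  obtain ⟨a, ha⟩ : ∃ a, a ∉ H := by
    by_contra! hall
    exact hH (eq_top_iff.mpr fun x _ => hall x)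
  have hcoset : (a + ·) '' (H : Set G) ⊆ (H : Set G)ᶜ := by
    rintro _ ⟨x, hx, rfl⟩ hax
    exact ha (by simpa using H.sub_mem hax hx)
  have hfin : (H : Set G).Finite := (h.subset hcoset).of_finite_image (add_right_injective a).injOn
  exact Set.infinite_univ (Set.union_compl_self (H : Set G) ▸ hfin.union h)

lemma AddMonoidHom.infinite_range_of_finite_ker {G H : Type*} [AddGroup G] [AddGroup H]
    [Infinite G] (f : G →+ H) (hf : (f.ker : Set G).Finite) : (f.range : Set H).Infinite := by
  intro hr
  have : Finite f.ker := hf.to_subtype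
  have : Finite (G ⧸ f.ker) :=
    (QuotientAddGroup.quotientKerEquivRange f).finite_iff.mpr hr.to_subtype
  have : Finite G := Finite.of_addSubgroup_quotient f.ker
  exact not_finite G

lemma finite_or_eq_top_of_stronglyMinimal [Infinite M] (hsm : StronglyMinimal (modLang R) M)
    (H : AddSubgroup M) (hH : Set.Definable₁ univ (modLang R) (H : Set M)) :
    (H : Set M).Finite ∨ H = ⊤ :=
  (hsm M rfl _ hH).imp_right H.eq_top_of_compl_finite

abbrev rsmulHom (M : Type w) [AddCommGroup M] [Module Rᵐᵒᵖ M] (r : R) : M →+ M :=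
  DistribSMul.toAddMonoidHom M (MulOpposite.op r)

lemma definable_ker_rsmulHom (r : R) :
    Set.Definable₁ univ (modLang R) ((rsmulHom M r).ker : Set M) := by
  refine (Set.empty_definable_iff.mpr ⟨Term.equal
    (Term.func (l := 1) (some r : (modLang R).Functions 1) ![Term.var 0])
    (Term.func (l := 0) (PUnit.unit : (modLang R).Functions 0) ![]), ?_⟩).mono
    (Set.empty_subset _)
  ext x
  exact Iff.rfl

lemma definable_range_rsmulHom (r : R) :
    Set.Definable₁ univ (modLang R) ((rsmulHom M r).range : Set M) := by
  refine (Set.empty_definable_iff.mpr ⟨BoundedFormula.ex (Term.bdEqual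
    (Term.func (l := 1) (some r : (modLang R).Functions 1) ![Term.var (Sum.inr 0)])
    (Term.var (Sum.inl 0))), ?_⟩).mono (Set.empty_subset _)
  ext x
  simp only [Set.mem_ofPred_eq, SetLike.mem_coe, AddMonoidHom.mem_range, Formula.Realize,
    BoundedFormula.realize_ex, BoundedFormula.realize_bdEqual]
  exact Iff.rfl

lemma rsmul_dichotomy_of_stronglyMinimal [Infinite M] (hsm : StronglyMinimal (modLang R) M)
    (r : R) : (∀ z : M, rsmul z r = 0) ∨
      ({z : M | rsmul z r = 0}.Finite ∧ ∀ y : M, ∃ x : M, rsmul x r = y) := by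
  rcases finite_or_eq_top_of_stronglyMinimal hsm _ (definable_ker_rsmulHom r) with hker | hker
  · refine Or.inr ⟨hker, fun y => ?_⟩
    rcases finite_or_eq_top_of_stronglyMinimal hsm _ (definable_range_rsmulHom r) with
      hrange | hrange
    · exact absurd hrange (AddMonoidHom.infinite_range_of_finite_ker _ hker)
    · exact (rsmulHom M r).mem_range.mp (hrange ▸ AddSubgroup.mem_top y)
  · exact Or.inl fun z => (rsmulHom M r).mem_ker.mp (hker ▸ AddSubgroup.mem_top z)

end StronglyMinimal

section RightAnnihilator

variable (R : Type v) [Ring R] (M : Type w) [AddCommGroup M] [Module Rᵐᵒᵖ M]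

lemma rsmul_mul (z : M) (a b : R) : rsmul z (a * b) = rsmul (rsmul z a) b := by
  rw [rsmul, MulOpposite.op_mul, mul_smul]

def rightAnnihilator : AddSubgroup R where
  carrier := {r | ∀ z : M, rsmul z r = 0}
  add_mem' {a b} ha hb z := by
    simp only [Set.mem_ofPred_eq, rsmul] at ha hb ⊢
    rw [MulOpposite.op_add, add_smul, ha, hb, add_zero]
  zero_mem' z := by rw [rsmul, MulOpposite.op_zero, zero_smul]
  neg_mem' {a} ha z := by
    simp only [Set.mem_ofPred_eq, rsmul] at ha ⊢
    rw [MulOpposite.op_neg, neg_smul, ha, neg_zero]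

variable {R M}

lemma mul_mem_rightAnnihilator_right {r : R} (hr : r ∈ rightAnnihilator R M) (s : R) :
    r * s ∈ rightAnnihilator R M := fun z => by rw [rsmul_mul, hr z, rsmul, smul_zero]

lemma mul_mem_rightAnnihilator_left {r : R} (hr : r ∈ rightAnnihilator R M) (a : R) :
    a * r ∈ rightAnnihilator R M := fun z => by rw [rsmul_mul, hr]

lemma one_notMem_rightAnnihilator [Nontrivial M] : (1 : R) ∉ rightAnnihilator R M := fun h => by
  obtain ⟨z, hz⟩ := exists_ne (0 : M)
  exact hz (by simpa [rsmul] using h z)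

end RightAnnihilator

/-- the annihilator ideal of an infinite strongly minimal right
`R`-module either vanishes (and `M` is divisible with finite annihilators), or is
generated by an irreducible `r` with `R/rR` a field and `M` an `R/rR`-vector space. -/
theorem stmt_4 (K : Type u) [Field K] (φ : K →+* K) (R : Type v) [Ring R]
    (ι : K →+* R) (t : R) (hR : IsSkewPolyRing K φ R ι t)
    (M : Type w) [AddCommGroup M] [Module Rᵐᵒᵖ M] (hinf : Infinite M)
    (hsm : StronglyMinimal (modLang R) M) :
    ({r : R | ∀ z : M, rsmul z r = 0} = {0} →
      RDivisible R M ∧ ∀ r : R, r ≠ 0 → {z : M | rsmul z r = 0}.Finite) ∧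
    ({r : R | ∀ z : M, rsmul z r = 0} ≠ {0} →
      ∃ r : R, Irreducible r ∧
        {q : R | ∀ z : M, rsmul z q = 0} = {q : R | ∃ s : R, q = r * s} ∧
        QuotByIsDivisionRing R r ∧
        ∀ z : M, rsmul z r = 0) := by
  have hdich := rsmul_dichotomy_of_stronglyMinimal (R := R) (M := M) hsm
  refine ⟨fun hI => ?_, fun hI => ?_⟩
  · have hfaithful (r : R) (hr : r ≠ 0) : ¬∀ z : M, rsmul z r = 0 := fun h =>
      hr (hI ▸ h : r ∈ ({0} : Set R))
    exact ⟨fun r hr => ((hdich r).resolve_left (hfaithful r hr)).2,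
      fun r hr => ((hdich r).resolve_left (hfaithful r hr)).1⟩
  obtain ⟨r, hrI, hdvd⟩ := hR.exists_forall_dvd (rightAnnihilator R M)
    fun _ hx => mul_mem_rightAnnihilator_right hx
  have hmem (q : R) : q ∈ rightAnnihilator R M ↔ r ∣ q :=
    ⟨hdvd q, fun ⟨s, hs⟩ => hs ▸ mul_mem_rightAnnihilator_right hrI s⟩
  have hr0 : r ≠ 0 := by
    rintro rfl
    exact hI (Set.ext fun q => (hmem q).trans zero_dvd_iff)
  have hunit : ¬IsUnit r := fun hu =>
    one_notMem_rightAnnihilator ((hmem 1).mpr hu.dvd)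
  have hprime (a b : R) (hab : r ∣ a * b) : r ∣ a ∨ r ∣ b := by
    refine (hdich a).imp (hdvd a) fun ⟨_, ha⟩ => hdvd b fun z => ?_
    obtain ⟨x, rfl⟩ := ha z
    rw [← rsmul_mul]
    exact (hmem _).mpr hab x
  have hirr := hR.irreducible_of_dvd_mul hr0 hunit hprime
  exact ⟨r, hirr, Set.ext hmem, hR.quotByIsDivisionRing hirr
    fun a x hx => (hmem _).mp (mul_mem_rightAnnihilator_left ((hmem x).mpr hx) a), hrI⟩
end

section
/- Let (M,v) be a non-trivially valued R-module which is K-trivially valued and C-minimal. Then for every nonzero r ∈ R, the annihilator ann_M(r) is finite. -/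
open FirstOrder Language Set

universe u v w x y

/-!
Write `θ γ = γ·t`. By `K`-triviality the monomial `x.(tⁱa)` has valuation `θⁱ (v x)`, so unless
`v x` is a fixed point of `θ` the orbit of `v x` is strictly monotone, a single monomial of `r`
dominates `x.r`, and `x.r ≠ 0`. Hence all nonzero elements of `T = ann(r)` have valuation `μ`,
the unique fixed point of `θ`.

By `C`-minimality, membership in `T` only depends on the distances to finitely many parameters.
If `T` were infinite, a generic point of `T` shows that `T` contains a ball around `0`; since `θ`
expands above `μ`, this forces `μ` to be the largest finite value, and then `T = {z | μ ≤ v z}`.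
The image `M.r` is then a definable subgroup meeting this ball only in `0`, and it is infinite
because `M` is non-trivially valued. But distinct elements of such a subgroup need distinct
parameters at distance `≥ μ`, so it is finite.
-/

structure IsValuedAddGroup {M : Type*} [AddCommGroup M] {Δ : Type*} [LinearOrder Δ]
    (v : M → Δ) (infty : Δ) : Prop where
  le_infty : ∀ γ : Δ, γ ≤ infty
  eq_infty_iff : ∀ z : M, v z = infty ↔ z = 0
  min_le_sub : ∀ z y : M, min (v z) (v y) ≤ v (z - y)

namespace IsValuedAddGroup

variable {M : Type*} [AddCommGroup M] {Δ : Type*} [LinearOrder Δ] {v : M → Δ} {infty : Δ}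
  (hv : IsValuedAddGroup v infty)
include hv

theorem map_zero : v 0 = infty := (hv.eq_infty_iff 0).2 rfl

theorem ne_infty {z : M} (hz : z ≠ 0) : v z ≠ infty := (hv.eq_infty_iff z).not.2 hz

theorem map_neg (z : M) : v (-z) = v z := by
  have h := hv.min_le_sub 0 z
  have h' := hv.min_le_sub 0 (-z)
  rw [hv.map_zero, zero_sub, min_eq_right (hv.le_infty _)] at h h'
  rw [neg_neg] at h'
  exact le_antisymm h' h

theorem map_sub_comm (a b : M) : v (a - b) = v (b - a) := by
  rw [← hv.map_neg, neg_sub]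

theorem min_le_add (a b : M) : min (v a) (v b) ≤ v (a + b) := by
  simpa only [sub_neg_eq_add, hv.map_neg] using hv.min_le_sub a (-b)

theorem map_add_eq_of_lt {a b : M} (h : v a < v b) : v (a + b) = v a := by
  refine le_antisymm ?_ (min_eq_left h.le ▸ hv.min_le_add a b)
  by_contra! hlt
  have := hv.min_le_sub (a + b) b
  rw [add_sub_cancel_right] at this
  exact (lt_min hlt h).not_ge this

theorem map_sub_eq_of_lt {a b : M} (h : v a < v b) : v (a - b) = v a := by
  rw [sub_eq_add_neg]
  exact hv.map_add_eq_of_lt (by rwa [hv.map_neg])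

theorem map_sub_eq_right_of_lt {a b : M} (h : v b < v a) : v (a - b) = v b := by
  rw [hv.map_sub_comm]
  exact hv.map_sub_eq_of_lt h

theorem lt_map_sum {ι : Type*} (s : Finset ι) (z : ι → M) {b : Δ} (hb : b ≠ infty)
    (h : ∀ i ∈ s, b < v (z i)) : b < v (∑ i ∈ s, z i) := by
  classical
  induction s using Finset.induction_on with
  | empty => rw [Finset.sum_empty, hv.map_zero]; exact (hv.le_infty b).lt_of_ne hb
  | insert i s hi ih =>
    rw [Finset.sum_insert hi]
    refine (lt_min (h i (s.mem_insert_self i)) (ih fun j hj => h j ?_)).trans_le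
      (hv.min_le_add _ _)
    exact Finset.mem_insert_of_mem hj

theorem map_sum_eq_of_lt {ι : Type*} [DecidableEq ι] {s : Finset ι} (z : ι → M) {i₀ : ι}
    (hi₀ : i₀ ∈ s) (hne : v (z i₀) ≠ infty) (h : ∀ i ∈ s, i ≠ i₀ → v (z i₀) < v (z i)) :
    v (∑ i ∈ s, z i) = v (z i₀) := by
  rw [← Finset.add_sum_erase s z hi₀]
  exact hv.map_add_eq_of_lt <| hv.lt_map_sum _ _ hne fun i hi =>
    h i (Finset.mem_of_mem_erase hi) (Finset.ne_of_mem_erase hi)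

theorem map_sub_eq_of_forall_lt_eq_infty {μ : Δ} (hmax : ∀ γ, μ < γ → γ = infty) {z z' c : M}
    (hz : μ ≤ v z) (hz' : μ ≤ v z') (hzc : z ≠ c) (hz'c : z' ≠ c) :
    v (z - c) = v (z' - c) := by
  rcases lt_or_ge (v c) μ with hc | hc
  · rw [hv.map_sub_eq_right_of_lt (hc.trans_le hz), hv.map_sub_eq_right_of_lt (hc.trans_le hz')]
  · have key : ∀ y, μ ≤ v y → y ≠ c → v (y - c) = μ := fun y hy hyc =>
      (((le_min hy hc).trans (hv.min_le_sub y c)).lt_or_eq.resolve_left fun hlt =>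
        hv.ne_infty (sub_ne_zero.2 hyc) (hmax _ hlt)).symm
    rw [key z hz hzc, key z' hz' hz'c]

theorem exists_lt_of_not_triviallyValued (hnt : ¬ TriviallyValued v) {x₀ : M}
    (hmax : ∀ γ, v x₀ < γ → γ = infty) : ∃ w, v w < v x₀ := by
  simp only [TriviallyValued, not_forall] at hnt
  obtain ⟨a, b, ha, hb, hab⟩ := hnt
  have hle : ∀ z ≠ 0, v z ≤ v x₀ := fun z hz => not_lt.1 fun h => hv.ne_infty hz (hmax _ h)
  by_contra! h
  exact hab (((hle a ha).antisymm (h a)).trans ((hle b hb).antisymm (h b)).symm)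

end IsValuedAddGroup

section DistanceDetermined

variable {M : Type*} [AddCommGroup M] {Δ : Type*} [LinearOrder Δ] {v : M → Δ} {infty : Δ}

def IsDistanceDetermined (v : M → Δ) {k : ℕ} (cs : Fin k → M) (s : Set M) : Prop :=
  ∀ a a' : M, (∀ i, v (a - cs i) = v (a' - cs i)) → (a ∈ s ↔ a' ∈ s)

theorem exists_eq_var_of_cLang_term {α : Type*} (τ : cLang.Term α) : ∃ s, τ = Term.var s := by
  cases τ with
  | var s => exact ⟨s, rfl⟩
  | func f _ => exact PEmpty.elim f

theorem realize_iff_of_forall_v_sub_eq (hv : IsValuedAddGroup v infty) {α : Type*} {n : ℕ}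
    {ψ : cLang.BoundedFormula α n} (hψ : ψ.IsQF) (g g' : α → M) (xs xs' : Fin n → M)
    (H : ∀ s s' : α ⊕ Fin n,
      v (Sum.elim g xs s - Sum.elim g xs s') = v (Sum.elim g' xs' s - Sum.elim g' xs' s')) :
    @BoundedFormula.Realize cLang M (cRelStructure M (Crel v)) α n ψ g xs ↔
      @BoundedFormula.Realize cLang M (cRelStructure M (Crel v)) α n ψ g' xs' := by
  let := cRelStructure M (Crel v)
  induction hψ with
  | falsum => exact Iff.rfl
  | imp _ _ ih₁ ih₂ => exact imp_congr ih₁ ih₂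
  | of_isAtomic h =>
    cases h with
    | equal t₁ t₂ =>
      obtain ⟨s₁, rfl⟩ := exists_eq_var_of_cLang_term t₁
      obtain ⟨s₂, rfl⟩ := exists_eq_var_of_cLang_term t₂
      simp only [BoundedFormula.realize_bdEqual, Term.realize_var]
      rw [← sub_eq_zero, ← hv.eq_infty_iff, H s₁ s₂, hv.eq_infty_iff, sub_eq_zero]
    | rel Rl ts =>
      rename_i l
      match l, Rl, ts with
      | 0, Rl, _ | 1, Rl, _ | 2, Rl, _ | _ + 4, Rl, _ => exact PEmpty.elim Rl
      | 3, _, ts =>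
        obtain ⟨s₀, h₀⟩ := exists_eq_var_of_cLang_term (ts 0)
        obtain ⟨s₁, h₁⟩ := exists_eq_var_of_cLang_term (ts 1)
        obtain ⟨s₂, h₂⟩ := exists_eq_var_of_cLang_term (ts 2)
        rw [BoundedFormula.realize_rel, BoundedFormula.realize_rel]
        show Crel v (Term.realize _ (ts 0)) (Term.realize _ (ts 1)) (Term.realize _ (ts 2)) ↔
          Crel v (Term.realize _ (ts 0)) (Term.realize _ (ts 1)) (Term.realize _ (ts 2))
        simp only [h₀, h₁, h₂, Term.realize_var, Crel, H s₀ s₁, H s₀ s₂, H s₁ s₂]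

theorem QFCDefinable.exists_isDistanceDetermined (hv : IsValuedAddGroup v infty) {s : Set M}
    (hs : QFCDefinable (Crel v) s) : ∃ (k : ℕ) (cs : Fin k → M), IsDistanceDetermined v cs s := by
  obtain ⟨k, ψ, cs, hψ, rfl⟩ := hs
  refine ⟨k, cs, fun a a' h => realize_iff_of_forall_v_sub_eq hv hψ _ _ default default ?_⟩
  rintro ((i | _) | s) ((j | _) | s')
  exacts [rfl, (hv.map_sub_comm _ _).trans ((h i).trans (hv.map_sub_comm _ _)), s'.elim0, h j,
    by simp only [Sum.elim_inl, Sum.elim_inr, sub_self], s'.elim0, s.elim0, s.elim0, s.elim0]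

end DistanceDetermined

namespace IsDistanceDetermined

variable {M : Type*} [AddCommGroup M] {Δ : Type*} [LinearOrder Δ] {v : M → Δ} {infty : Δ}
  (hv : IsValuedAddGroup v infty) {k : ℕ} {cs : Fin k → M}
include hv

theorem exists_ball_subset {T : AddSubgroup M} (hT : IsDistanceDetermined v cs T) {x₀ : M}
    (hx₀ : x₀ ∈ T) (hx₀0 : x₀ ≠ 0) (hx₀cs : ∀ i, x₀ ≠ cs i) :
    ∃ b ≠ infty, ∀ z, b < v z → z ∈ T := by
  obtain ⟨o, ho⟩ := Finite.exists_max fun o : Option (Fin k) =>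
    o.elim (v x₀) fun i => v (x₀ - cs i)
  refine ⟨o.elim (v x₀) fun i => v (x₀ - cs i), ?_, fun z hz => ?_⟩
  · cases o with
    | none => exact hv.ne_infty hx₀0
    | some i => exact hv.ne_infty (sub_ne_zero.2 (hx₀cs i))
  have hx₀z : x₀ + z ∈ T := by
    refine (hT x₀ (x₀ + z) fun i => ?_).1 hx₀
    rw [add_sub_right_comm, hv.map_add_eq_of_lt ((ho (some i)).trans_lt hz)]
  simpa using T.sub_mem hx₀z hx₀

theorem coe_eq_setOf_le {T : AddSubgroup M} (hT : IsDistanceDetermined v cs T)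
    (hTinf : (T : Set M).Infinite) {x₀ : M} (hx₀ : x₀ ∈ T) (hx₀cs : ∀ i, x₀ ≠ cs i)
    (hval : ∀ z ∈ T, z ≠ 0 → v z = v x₀) (hmax : ∀ γ, v x₀ < γ → γ = infty) :
    (T : Set M) = {z | v x₀ ≤ v z} := by
  have hle : ∀ z ∈ T, v x₀ ≤ v z := fun z hz => by
    by_cases hz0 : z = 0
    · rw [hz0, hv.map_zero]; exact hv.le_infty _
    · exact (hval z hz hz0).ge
  have hgeneric : ∀ z, v x₀ ≤ v z → (∀ i, z ≠ cs i) → z ∈ T := fun z hz hzcs =>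
    (hT x₀ z fun i =>
      hv.map_sub_eq_of_forall_lt_eq_infty hmax le_rfl hz (hx₀cs i) (hzcs i)).1 hx₀
  refine Set.Subset.antisymm hle fun z hz => ?_
  -- translate `z` by an element of `T` away from the finitely many parameters
  obtain ⟨y, hyT, hy⟩ := (hTinf.sdiff (Set.finite_range fun i => cs i - z)).nonempty
  have hzy : z + y ∈ T := hgeneric _ ((le_min hz (hle y hyT)).trans (hv.min_le_add z y))
    fun i h => hy ⟨i, by simp only [← h, add_sub_cancel_left]⟩
  simpa using T.sub_mem hzy hyT

theorem finite {D : AddSubgroup M} (hD : IsDistanceDetermined v cs D) {x₀ : M} (hx₀ : x₀ ∉ D)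
    (hlt : ∀ e ∈ D, e ≠ 0 → v e < v x₀) : (D : Set M).Finite := by
  -- `x₀ + e ∉ D`, so `e` and `x₀ + e` must be distinguished by some parameter `cs i`,
  -- which forces `cs i` to be `v x₀`-close to `e`
  have hnear : ∀ e : D, ∃ i, v x₀ ≤ v (e - cs i) := by
    intro e
    by_contra! h
    have hx₀e : x₀ + e ∈ D := (hD e (x₀ + e) fun i => by
      rw [add_comm, add_sub_right_comm, hv.map_add_eq_of_lt (h i)]).1 e.2
    exact hx₀ (by simpa using D.sub_mem hx₀e e.2)
  choose f hf using hnear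
  refine Set.finite_coe_iff.1 (Finite.of_injective f fun e e' he => ?_)
  by_contra hne
  refine (hlt _ (D.sub_mem e.2 e'.2) (sub_ne_zero.2 (Subtype.coe_injective.ne hne))).not_ge ?_
  calc v x₀ ≤ min (v (e - cs (f e))) (v (e' - cs (f e))) := le_min (hf e) (he ▸ hf e')
    _ ≤ v ((e - cs (f e)) - (e' - cs (f e))) := hv.min_le_sub _ _
    _ = v (e - e') := by rw [sub_sub_sub_cancel_right]

end IsDistanceDetermined

section ValuedRModule

variable {K : Type*} [Field K] {φ : K →+* K} {R : Type*} [Ring R] {ι : K →+* R} {t : R}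
  {M : Type*} [AddCommGroup M] [Module Rᵐᵒᵖ M] {Δ : Type*} [LinearOrder Δ] {infty : Δ}
  {act : Δ → R → Δ} {v : M → Δ}

theorem rsmul_mul_s12 (x : M) (p q : R) : rsmul x (p * q) = rsmul (rsmul x p) q := by
  rw [rsmul, rsmul, rsmul, MulOpposite.op_mul, mul_smul]

theorem rsmul_finsupp_sum {α β : Type*} [Zero β] (x : M) (c : α →₀ β) (g : α → β → R) :
    rsmul x (c.sum g) = ∑ i ∈ c.support, rsmul x (g i (c i)) := by
  rw [Finsupp.sum, rsmul, Finset.op_sum, Finset.sum_smul]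

namespace IsValuedRMod

variable (hV : IsValuedRMod K φ R ι t M Δ infty act v)
include hV

theorem isValuedAddGroup : IsValuedAddGroup v infty :=
  ⟨hV.le_infty, hV.v_eq_infty_iff, hV.v_sub⟩

theorem strictMono_act_t : StrictMono (act · t) := by
  intro δ γ h
  show act δ t < act γ t
  have hδ : δ ≠ infty := (h.trans_le (hV.le_infty γ)).ne
  by_cases hγ : γ = infty
  · rw [hγ, hV.act_t_infty]
    exact (hV.le_infty _).lt_of_ne (hV.act_t_ne_infty δ hδ)
  · exact hV.act_t_strictMono γ δ hγ hδ h

theorem iterate_act_t_ne_infty {γ : Δ} (hγ : γ ≠ infty) (n : ℕ) :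
    (act · t)^[n] γ ≠ infty := by
  induction n with
  | zero => exact hγ
  | succ n ih =>
    rw [Function.iterate_succ_apply']
    exact hV.act_t_ne_infty _ ih

theorem v_rsmul_t_pow (x : M) (n : ℕ) : v (rsmul x (t ^ n)) = (act · t)^[n] (v x) := by
  induction n with
  | zero => rw [pow_zero, rsmul, MulOpposite.op_one, one_smul, Function.iterate_zero_apply]
  | succ n ih => rw [pow_succ, rsmul_mul_s12, Function.iterate_succ_apply', hV.v_smul_t, ih]

-- `act_monomial_lt` for the monomials `t = t¹·1` and `1 = t⁰·1`
theorem act_t_lt_of_act_t_le {γ : Δ} (hγ : γ ≠ infty) (h : act γ t ≤ γ) {δ : Δ}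
    (hδ : δ < γ) : act δ t < δ := by
  have e₁ : t ^ 1 * ι (1 : K) = t := by rw [pow_one, map_one, mul_one]
  have e₀ : t ^ 0 * ι (1 : K) = 1 := by rw [pow_zero, map_one, mul_one]
  have := hV.act_monomial_lt 1 0 1 1 one_ne_zero one_ne_zero zero_lt_one γ hγ
    (by rwa [e₁, e₀, hV.act_one]) δ hδ
  rwa [e₁, e₀, hV.act_one] at this

theorem act_t_lt_of_lt_fixed {μ δ : Δ} (hfix : act μ t = μ) (hμ : μ ≠ infty) (hδ : δ < μ) :
    act δ t < δ :=
  hV.act_t_lt_of_act_t_le hμ hfix.le hδ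

theorem lt_act_t_of_fixed_lt {μ δ : Δ} (hfix : act μ t = μ) (hμδ : μ < δ) (hδ : δ ≠ infty) :
    δ < act δ t := by
  by_contra! h
  exact (hV.act_t_lt_of_act_t_le hδ h hμδ).ne hfix

theorem eq_of_act_t_eq {μ₁ μ₂ : Δ} (h₁ : act μ₁ t = μ₁) (hμ₁ : μ₁ ≠ infty)
    (h₂ : act μ₂ t = μ₂) (hμ₂ : μ₂ ≠ infty) : μ₁ = μ₂ := by
  rcases lt_trichotomy μ₁ μ₂ with h | h | h
  · exact absurd h₁ (hV.act_t_lt_of_lt_fixed h₂ hμ₂ h).ne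
  · exact h
  · exact absurd h₂ (hV.act_t_lt_of_lt_fixed h₁ hμ₁ h).ne

theorem eq_infty_of_fixed_lt {μ b : Δ} (hfix : act μ t = μ) (hb : b ≠ infty)
    (hball : ∀ z, b < v z → z = 0 ∨ v z = μ) {γ : Δ} (hγ : μ < γ) : γ = infty := by
  by_contra hγ'
  have hα : max b γ ≠ infty := by rcases max_choice b γ with h | h <;> rw [h] <;> assumption
  have hexp := hV.lt_act_t_of_fixed_lt hfix (hγ.trans_le (le_max_right b γ)) hα
  obtain ⟨z, hz⟩ := hV.v_surjective (act (max b γ) t)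
  rcases hball z (hz ▸ (le_max_left b γ).trans_lt hexp) with rfl | hzμ
  · exact hV.act_t_ne_infty _ hα (hz ▸ (hV.v_eq_infty_iff 0).2 rfl)
  · exact (hγ.trans_le (le_max_right b γ)).not_gt (hzμ ▸ hz ▸ hexp)

section KTrivial

variable (hK : KTriviallyValued ι v) {c : ℕ →₀ K}
include hK

theorem v_rsmul_monomial (x : M) (i : ℕ) {a : K} (ha : a ≠ 0) :
    v (rsmul x (t ^ i * ι a)) = (act · t)^[i] (v x) := by
  rw [rsmul_mul_s12, hK _ a ha, hV.v_rsmul_t_pow]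

theorem v_rsmul_sum_eq_of_lt {x : M} (hx : x ≠ 0) {i₀ : ℕ} (hi₀ : i₀ ∈ c.support)
    (h : ∀ i ∈ c.support, i ≠ i₀ → (act · t)^[i₀] (v x) < (act · t)^[i] (v x)) :
    v (rsmul x (c.sum fun i a => t ^ i * ι a)) = (act · t)^[i₀] (v x) := by
  have hmono : ∀ i ∈ c.support, v (rsmul x (t ^ i * ι (c i))) = (act · t)^[i] (v x) :=
    fun i hi => hV.v_rsmul_monomial hK x i (Finsupp.mem_support_iff.1 hi)
  rw [rsmul_finsupp_sum, hV.isValuedAddGroup.map_sum_eq_of_lt _ hi₀, hmono i₀ hi₀]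
  · rw [hmono i₀ hi₀]
    exact hV.iterate_act_t_ne_infty (hV.isValuedAddGroup.ne_infty hx) i₀
  · intro i hi hne
    rw [hmono i₀ hi₀, hmono i hi]
    exact h i hi hne

theorem v_rsmul_sum_of_act_t_lt (hc : c.support.Nonempty) {x : M}
    (hx : act (v x) t < v x) :
    v (rsmul x (c.sum fun i a => t ^ i * ι a)) = (act · t)^[c.support.max' hc] (v x) := by
  have hx0 : x ≠ 0 := by
    rintro rfl
    rw [(hV.v_eq_infty_iff 0).2 rfl, hV.act_t_infty] at hx
    exact hx.false
  exact hV.v_rsmul_sum_eq_of_lt hK hx0 (c.support.max'_mem hc) fun i hi hne =>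
    hV.strictMono_act_t.strictAnti_iterate_of_map_lt hx ((c.support.le_max' i hi).lt_of_ne hne)

theorem v_rsmul_sum_of_lt_act_t (hc : c.support.Nonempty) {x : M}
    (hx : v x < act (v x) t) :
    v (rsmul x (c.sum fun i a => t ^ i * ι a)) = (act · t)^[c.support.min' hc] (v x) := by
  have hx0 : x ≠ 0 := by
    rintro rfl
    rw [(hV.v_eq_infty_iff 0).2 rfl, hV.act_t_infty] at hx
    exact hx.false
  exact hV.v_rsmul_sum_eq_of_lt hK hx0 (c.support.min'_mem hc) fun i hi hne =>
    hV.strictMono_act_t.strictMono_iterate_of_lt_map hx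
      ((c.support.min'_le i hi).lt_of_ne hne.symm)

theorem act_t_eq_of_rsmul_sum_eq_zero (hc : c.support.Nonempty) {x : M} (hx : x ≠ 0)
    (h : rsmul x (c.sum fun i a => t ^ i * ι a) = 0) : act (v x) t = v x := by
  have hvx := hV.isValuedAddGroup.ne_infty hx
  have hr : v (rsmul x (c.sum fun i a => t ^ i * ι a)) = infty := (hV.v_eq_infty_iff _).2 h
  rcases lt_trichotomy (act (v x) t) (v x) with hlt | heq | hgt
  · exact absurd (hr ▸ hV.v_rsmul_sum_of_act_t_lt hK hc hlt).symm
      (hV.iterate_act_t_ne_infty hvx _)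
  · exact heq
  · exact absurd (hr ▸ hV.v_rsmul_sum_of_lt_act_t hK hc hgt).symm
      (hV.iterate_act_t_ne_infty hvx _)

theorem v_rsmul_sum_lt_of_lt_fixed (hc : c.support.Nonempty) {μ : Δ} (hfix : act μ t = μ)
    (hμ : μ ≠ infty) {x : M} (hx : v x < μ) :
    v (rsmul x (c.sum fun i a => t ^ i * ι a)) < μ := by
  have hcontr := hV.act_t_lt_of_lt_fixed hfix hμ hx
  rw [hV.v_rsmul_sum_of_act_t_lt hK hc hcontr]
  exact ((hV.strictMono_act_t.strictAnti_iterate_of_map_lt hcontr).antitone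
    (Nat.zero_le _)).trans_lt hx

theorem infinite_range_rsmul_sum (hc : c.support.Nonempty) {μ : Δ} (hfix : act μ t = μ)
    (hμ : μ ≠ infty) {w : M} (hw : v w < μ) :
    {z : M | ∃ y, rsmul y (c.sum fun i a => t ^ i * ι a) = z}.Infinite := by
  have hcontr := hV.act_t_lt_of_lt_fixed hfix hμ hw
  have hanti := hV.strictMono_act_t.strictAnti_iterate_of_map_lt hcontr
  have hval : ∀ j : ℕ, v (rsmul (rsmul w (t ^ j)) (c.sum fun i a => t ^ i * ι a)) =
      (act · t)^[c.support.max' hc + j] (v w) := fun j => by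
    have hj : act (v (rsmul w (t ^ j))) t < v (rsmul w (t ^ j)) := by
      rw [hV.v_rsmul_t_pow, ← Function.iterate_succ_apply' (act · t)]
      exact hanti (Nat.lt_succ_self j)
    rw [hV.v_rsmul_sum_of_act_t_lt hK hc hj, hV.v_rsmul_t_pow, Function.iterate_add_apply]
  refine Set.infinite_of_injective_forall_mem
    (f := fun j : ℕ => rsmul (rsmul w (t ^ j)) (c.sum fun i a => t ^ i * ι a))
    (fun j j' h => ?_) fun j => ⟨_, rfl⟩
  have := congrArg v h
  rw [hval, hval] at this
  exact Nat.add_left_cancel (hanti.injective this)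

end KTrivial

end IsValuedRMod

end ValuedRModule

section Definability

variable {R : Type*} [Ring R] {M : Type*} [AddCommGroup M] [Module Rᵐᵒᵖ M]

theorem definable_setOf_rsmul_eq_zero (C : M → M → M → Prop) (r : R) :
    letI := cModStructure R M C
    Set.Definable₁ (univ : Set M) (cModLang R) {z : M | rsmul z r = 0} := by
  let := cModStructure R M C
  refine Set.Definable.mono ((Set.empty_definable_iff).2 ⟨Term.equal
    (Term.func (show (cModLang R).Functions 1 from some r) ![Term.var 0])
    (Term.func (show (cModLang R).Functions 0 from PUnit.unit) ![]), ?_⟩) (Set.empty_subset _)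
  ext g
  exact Iff.rfl

theorem definable_setOf_exists_rsmul_eq (C : M → M → M → Prop) (r : R) :
    letI := cModStructure R M C
    Set.Definable₁ (univ : Set M) (cModLang R) {z : M | ∃ y : M, rsmul y r = z} := by
  let := cModStructure R M C
  refine Set.Definable.mono ((Set.empty_definable_iff).2 ⟨BoundedFormula.ex (Term.bdEqual
    (Term.func (show (cModLang R).Functions 1 from some r) ![Term.var (Sum.inr 0)])
    (Term.var (Sum.inl 0))), ?_⟩) (Set.empty_subset _)
  ext g
  have hsnoc : ∀ b : M, (Fin.snoc (default : Fin 0 → M) b : Fin 1 → M) = fun _ => b :=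
    fun b => funext fun i => by rw [Fin.eq_zero i]; exact Fin.snoc_last _ _
  change (∃ y, rsmul y r = g 0) ↔ Formula.Realize _ g
  rw [Formula.Realize, BoundedFormula.realize_ex]
  simp only [hsnoc]
  exact exists_congr fun b => Iff.rfl

theorem CMinimal.exists_isDistanceDetermined {Δ : Type*} [LinearOrder Δ] {v : M → Δ}
    {infty : Δ} (hv : IsValuedAddGroup v infty)
    (hcmin : @CMinimal (cModLang R) PUnit.unit M (cModStructure R M (Crel v))) {s : Set M}
    (hs : letI := cModStructure R M (Crel v); Set.Definable₁ (univ : Set M) (cModLang R) s) :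
    ∃ (k : ℕ) (cs : Fin k → M), IsDistanceDetermined v cs s :=
  QFCDefinable.exists_isDistanceDetermined hv (@hcmin M (cModStructure R M (Crel v)) rfl s hs)

end Definability

/-- a non-trivially valued, `K`-trivially valued, `C`-minimal `R`-module
has finite annihilators. -/
theorem stmt_12 (K : Type u) [Field K] (φ : K →+* K) (R : Type v) [Ring R]
    (ι : K →+* R) (t : R) (hR : IsSkewPolyRing K φ R ι t)
    (M : Type w) [AddCommGroup M] [Module Rᵐᵒᵖ M]
    (Δ : Type x) [LinearOrder Δ] (infty : Δ) (act : Δ → R → Δ) (v : M → Δ)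
    (hV : IsValuedRMod K φ R ι t M Δ infty act v)
    (hnontriv : ¬ TriviallyValued v)
    (hKtriv : KTriviallyValued ι v)
    (hcmin : @CMinimal (cModLang R) PUnit.unit M (cModStructure R M (Crel v))) :
    ∀ r : R, r ≠ 0 → {z : M | rsmul z r = 0}.Finite := by
  intro r hr
  obtain ⟨c, rfl⟩ := (hR.unique_rep r).exists
  have hc : c.support.Nonempty :=
    Finsupp.support_nonempty_iff.2 fun h => hr (by rw [h, Finsupp.sum_zero_index])
  have hv := hV.isValuedAddGroup
  set f := DistribSMul.toAddMonoidHom M (MulOpposite.op (c.sum fun i a => t ^ i * ι a))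
  change (f.ker : Set M).Finite
  refine Set.not_infinite.1 fun hTinf => ?_
  obtain ⟨k, cs, hT⟩ := CMinimal.exists_isDistanceDetermined hv hcmin
    (definable_setOf_rsmul_eq_zero (Crel v) _)
  obtain ⟨x₀, ⟨hx₀T, hx₀cs⟩, hx₀0⟩ :=
    ((hTinf.sdiff (Set.finite_range cs)).sdiff (Set.finite_singleton 0)).nonempty
  replace hx₀cs : ∀ i, x₀ ≠ cs i := fun i h => hx₀cs ⟨i, h.symm⟩
  have hμ : v x₀ ≠ infty := hv.ne_infty hx₀0
  have hfix : act (v x₀) t = v x₀ := hV.act_t_eq_of_rsmul_sum_eq_zero hKtriv hc hx₀0 hx₀T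
  have hval : ∀ z ∈ f.ker, z ≠ 0 → v z = v x₀ := fun z hz hz0 => hV.eq_of_act_t_eq
    (hV.act_t_eq_of_rsmul_sum_eq_zero hKtriv hc hz0 hz) (hv.ne_infty hz0) hfix hμ
  obtain ⟨b, hb, hball⟩ := hT.exists_ball_subset hv (T := f.ker) hx₀T hx₀0 hx₀cs
  have hmax : ∀ γ, v x₀ < γ → γ = infty := fun γ => hV.eq_infty_of_fixed_lt hfix hb
    fun z hz => (em (z = 0)).imp_right (hval z (hball z hz))
  have hTball := hT.coe_eq_setOf_le hv (T := f.ker) hTinf hx₀T hx₀cs hval hmax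
  obtain ⟨l, ds, hD⟩ := CMinimal.exists_isDistanceDetermined hv hcmin
    (definable_setOf_exists_rsmul_eq (Crel v) _)
  have hlt : ∀ e ∈ f.range, e ≠ 0 → v e < v x₀ := by
    rintro _ ⟨y, rfl⟩ hy
    refine hV.v_rsmul_sum_lt_of_lt_fixed hKtriv hc hfix hμ (lt_of_not_ge fun h => hy ?_)
    exact (hTball ▸ h : y ∈ (f.ker : Set M))
  obtain ⟨w, hw⟩ := hv.exists_lt_of_not_triviallyValued hnontriv hmax
  exact hV.infinite_range_rsmul_sum hKtriv hc hfix hμ hw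
    (hD.finite hv (D := f.range) (fun h => (hlt x₀ h hx₀0).false) hlt)
end
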